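/- arXiv:2605.19828 — 2 statements merged into one kernel-verified Lean document; each statement's English description precedes it below -/
import Mathlib

section
/- Let E be a real normed vector space, C ⊆ E a nonempty compact convex set, f : E → ℝ, Δ : E → E → ℝ, and C_f ≥ 0 a constant such that Δ satisfies the curvature bound C_f for f on C. Assume that for every x ∈ C the piecewise linearization at x is convex on C. Let x* ∈ C be a minimizer of f over C, let ε ≥ 0, and consider the agnostic schedule α_t = 2/(t+2). Let x, v : ℕ → E satisfy: x_0 ∈ C; for every t, v_t ∈ C is an ε-approximate model minimizer at x_t with step-size α_t; and x_{t+1} = (1 − α_t)·x_t + α_t·v_t. Then for every t ∈ ℕ, f(x_{t+1}) − f(x*) ≤ (1/2)·C_f + 2·C_f·(1 + 2ε)/(t + 2). -/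
/-!
For the step `x⁺ = x + α (v - x)` and any comparison point `x* ∈ C`,
curvature and the oracle give `f x⁺ ≤ f x + Δ x (α (v - x)) + α²/2 Cf
≤ f x + Δ x (α (x* - x)) + (1 + ε) α²/2 Cf`; convexity of the model scales the last model value
down to `α Δ x (x* - x)`, and curvature at step `1` bounds that by `α (f x* - f x + Cf/2)`.
Hence the gap `g t = f (x t) - f x* - Cf/2` obeys the Frank–Wolfe recursion
`g (t+1) ≤ (1 - α t) g t + (α t)² (1 + ε) Cf/2`, which the schedule `α t = 2/(t+2)` turns into
`g (t+1) ≤ 2 (1 + ε) Cf/(t+2)`.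
-/

open Set

def CurvatureBound {E : Type*} [NormedAddCommGroup E] [NormedSpace ℝ E]
    (C : Set E) (f : E → ℝ) (Δ : E → E → ℝ) (Cf : ℝ) : Prop :=
  ∀ x ∈ C, ∀ v ∈ C, ∀ α ∈ Ioc (0:ℝ) 1,
    |f (x + α • (v - x)) - f x - Δ x (α • (v - x))| ≤ α ^ 2 / 2 * Cf

theorem frankWolfe_rate_step {s b : ℝ} (hs : 0 < s) (hb : 0 ≤ b) :
    (1 - 2 / (s + 1)) * (4 * b / s) + (2 / (s + 1)) ^ 2 * b ≤ 4 * b / (s + 1) := by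
  have hslack : 4 * b / (s + 1) - ((1 - 2 / (s + 1)) * (4 * b / s) + (2 / (s + 1)) ^ 2 * b)
      = 4 * b / (s * (s + 1) ^ 2) := by
    field_simp
    ring
  have : 0 ≤ 4 * b / (s * (s + 1) ^ 2) := by positivity
  linarith

theorem frankWolfe_recursion_le (g : ℕ → ℝ) (b : ℝ) (hb : 0 ≤ b)
    (hrec : ∀ t : ℕ, g (t + 1) ≤ (1 - 2 / ((t : ℝ) + 2)) * g t + (2 / ((t : ℝ) + 2)) ^ 2 * b) :
    ∀ t : ℕ, g (t + 1) ≤ 4 * b / ((t : ℝ) + 2) := by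
  intro t
  induction t with
  | zero => linarith [hrec 0]
  | succ n ih =>
    have hs : (0:ℝ) < n + 2 := by positivity
    have hcast : ((n + 1 : ℕ) : ℝ) + 2 = (n + 2) + 1 := by push_cast; ring
    have hrec' := hrec (n + 1)
    rw [hcast] at hrec' ⊢
    have hcoef : 0 ≤ 1 - 2 / ((n : ℝ) + 2 + 1) := by
      rw [sub_nonneg, div_le_one (by positivity)]; linarith
    linarith [mul_le_mul_of_nonneg_left ih hcoef, frankWolfe_rate_step hs hb]

section

variable {E : Type*} [NormedAddCommGroup E] [NormedSpace ℝ E] {C : Set E}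

theorem apply_smul_sub_le_of_convexOn {g : E → ℝ} {x y : E} {a : ℝ}
    (hg : ConvexOn ℝ C (fun z => g (z - x))) (hg0 : g 0 = 0) (hx : x ∈ C) (hy : y ∈ C)
    (ha₀ : 0 ≤ a) (ha₁ : a ≤ 1) :
    g (a • (y - x)) ≤ a * g (y - x) := by
  have h := hg.2 hx hy (sub_nonneg.2 ha₁) ha₀ (sub_add_cancel 1 a)
  have hseg : (1 - a) • x + a • y - x = a • (y - x) := by module
  simpa [hseg, hg0] using h

theorem CurvatureBound.model_le {f : E → ℝ} {Δ : E → E → ℝ} {Cf : ℝ}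
    (hcurv : CurvatureBound C f Δ Cf) {x y : E} (hx : x ∈ C) (hy : y ∈ C) :
    Δ x (y - x) ≤ f y - f x + Cf / 2 := by
  have h := (abs_le.1 (hcurv x hx y hy 1 ⟨one_pos, le_rfl⟩)).1
  simp only [one_smul, add_sub_cancel] at h
  linarith

theorem CurvatureBound.gap_step_le {f : E → ℝ} {Δ : E → E → ℝ} {Cf ε a : ℝ}
    (hcurv : CurvatureBound C f Δ Cf) {x v y : E} (hx : x ∈ C) (hv : v ∈ C) (hy : y ∈ C)
    (hconv : ConvexOn ℝ C (fun z => Δ x (z - x))) (hΔ0 : Δ x 0 = 0) (ha : a ∈ Ioc (0:ℝ) 1)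
    (horacle : Δ x (a • (v - x)) ≤ Δ x (a • (y - x)) + ε * a ^ 2 / 2 * Cf) :
    f (x + a • (v - x)) - f y - Cf / 2 ≤
      (1 - a) * (f x - f y - Cf / 2) + a ^ 2 * ((1 + ε) * Cf / 2) := by
  have hstep := (abs_le.1 (hcurv x hx v hv a ha)).2
  have hscale := apply_smul_sub_le_of_convexOn hconv hΔ0 hx hy ha.1.le ha.2
  have hfull := mul_le_mul_of_nonneg_left (hcurv.model_le hx hy) ha.1.le
  linarith

end

theorem mem_of_relaxed_steps {E : Type*} [AddCommGroup E] [Module ℝ E] {C : Set E}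
    (hC : Convex ℝ C) {α : ℕ → ℝ} (hα : ∀ t, α t ∈ Icc (0:ℝ) 1) {x v : ℕ → E} (hx0 : x 0 ∈ C)
    (hv : ∀ t, v t ∈ C) (hstep : ∀ t, x (t + 1) = (1 - α t) • x t + α t • v t) :
    ∀ t, x t ∈ C := by
  intro t
  induction t with
  | zero => exact hx0
  | succ n ih =>
    rw [hstep n]
    exact hC ih (hv n) (sub_nonneg.2 (hα n).2) (hα n).1 (sub_add_cancel 1 _)

theorem agnostic_step_mem_Ioc (t : ℕ) : 2 / ((t : ℝ) + 2) ∈ Ioc (0:ℝ) 1 :=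
  ⟨by positivity, by rw [div_le_one (by positivity)]; linarith [t.cast_nonneg (α := ℝ)]⟩

theorem pw_linear_asfw_primal_dual_convergence_general
    {E : Type*} [NormedAddCommGroup E] [NormedSpace ℝ E]
    (C : Set E) (hCconv : Convex ℝ C)
    (f : E → ℝ)
    (Δ : E → E → ℝ) (Cf : ℝ) (hCf : 0 ≤ Cf)
    (hcurv : ∀ x ∈ C, ∀ v ∈ C, ∀ α ∈ Set.Ioc (0:ℝ) 1,
      |f (x + α • (v - x)) - f x - Δ x (α • (v - x))| ≤ α ^ 2 / 2 * Cf)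
    (hPLconv : ∀ x ∈ C, ConvexOn ℝ C (fun y => Δ x (y - x)) ∧ Δ x 0 = 0)
    (xs : E) (hxs : xs ∈ C)
    (ε : ℝ) (hε : 0 ≤ ε)
    (α : ℕ → ℝ) (hα : ∀ t : ℕ, α t = 2 / ((t : ℝ) + 2))
    (x v : ℕ → E) (hx0 : x 0 ∈ C) (hv : ∀ t, v t ∈ C)
    (horacle : ∀ t : ℕ, ∀ w ∈ C,
      Δ (x t) (α t • (v t - x t)) ≤ Δ (x t) (α t • (w - x t)) + ε * (α t) ^ 2 / 2 * Cf)
    (hstep : ∀ t : ℕ, x (t + 1) = (1 - α t) • x t + α t • v t) :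
    ∀ t : ℕ, f (x (t + 1)) - f xs ≤
      1 / 2 * Cf + 2 * Cf * (1 + 2 * ε) / ((t : ℝ) + 2) := by
  have hαIoc : ∀ t, α t ∈ Ioc (0:ℝ) 1 := fun t => hα t ▸ agnostic_step_mem_Ioc t
  have hxC := mem_of_relaxed_steps hCconv (fun t => Ioc_subset_Icc_self (hαIoc t)) hx0 hv hstep
  have hgap : ∀ t : ℕ,
      f (x (t + 1)) - f xs - Cf / 2 ≤ 4 * ((1 + ε) * Cf / 2) / ((t : ℝ) + 2) := by
    refine frankWolfe_recursion_le (fun t => f (x t) - f xs - Cf / 2) _ (by positivity) fun t => ?_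
    have h := CurvatureBound.gap_step_le hcurv (hxC t) (hv t) hxs
      (hPLconv _ (hxC t)).1 (hPLconv _ (hxC t)).2 (hαIoc t) (horacle t xs hxs)
    have hx1 : x (t + 1) = x t + α t • (v t - x t) := by rw [hstep t]; module
    rwa [← hα t, hx1]
  intro t
  have hrate :
      4 * ((1 + ε) * Cf / 2) / ((t : ℝ) + 2) ≤ 2 * Cf * (1 + 2 * ε) / ((t : ℝ) + 2) := by
    gcongr ?_ / _
    nlinarith
  linarith [hgap t]

/-- Primal-dual convergence for the piecewise linear model: if only the piecewise
linearizations of `f` are convex on `C`, the relaxed ASFW iterates with agnostic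
schedule `α t = 2/(t+2)` satisfy
`f (x (t+1)) - f xs ≤ (1/2) * Cf + 2 * Cf * (1 + 2ε) / (t + 2)`. -/
theorem pw_linear_asfw_primal_dual_convergence
    {E : Type*} [NormedAddCommGroup E] [NormedSpace ℝ E]
    (C : Set E) (hCne : C.Nonempty) (hCcomp : IsCompact C) (hCconv : Convex ℝ C)
    (f : E → ℝ)
    (Δ : E → E → ℝ) (Cf : ℝ) (hCf : 0 ≤ Cf)
    (hcurv : ∀ x ∈ C, ∀ v ∈ C, ∀ α ∈ Set.Ioc (0:ℝ) 1,
      |f (x + α • (v - x)) - f x - Δ x (α • (v - x))| ≤ α ^ 2 / 2 * Cf)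
    (hPLconv : ∀ x ∈ C, ConvexOn ℝ C (fun y => Δ x (y - x)) ∧ Δ x 0 = 0)
    (xs : E) (hxs : xs ∈ C) (hmin : ∀ y ∈ C, f xs ≤ f y)
    (ε : ℝ) (hε : 0 ≤ ε)
    (α : ℕ → ℝ) (hα : ∀ t : ℕ, α t = 2 / ((t : ℝ) + 2))
    (x v : ℕ → E) (hx0 : x 0 ∈ C) (hv : ∀ t, v t ∈ C)
    (horacle : ∀ t : ℕ, ∀ w ∈ C,
      Δ (x t) (α t • (v t - x t)) ≤ Δ (x t) (α t • (w - x t)) + ε * (α t) ^ 2 / 2 * Cf)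
    (hstep : ∀ t : ℕ, x (t + 1) = (1 - α t) • x t + α t • v t) :
    ∀ t : ℕ, f (x (t + 1)) - f xs ≤
      1 / 2 * Cf + 2 * Cf * (1 + 2 * ε) / ((t : ℝ) + 2) :=
  pw_linear_asfw_primal_dual_convergence_general C hCconv f Δ Cf hCf hcurv hPLconv xs hxs ε hε α hα
    x v hx0 hv horacle hstep
end

section
/- Let E be a real normed vector space, C ⊆ E a nonempty compact convex set, f : E → ℝ, Δ : E → E → ℝ, C_f ≥ 0 such that Δ satisfies the curvature bound C_f for f on C, and ε ≥ 0. Let a : ℕ → ℝ with a_t > 0 for all t, A_t = ∑_{i=0}^t a_i, and α_t = a_t/A_t. Let x, v : ℕ → E with x_0 ∈ C, v_t ∈ C, and x_{t+1} = (1 − α_t)·x_t + α_t·v_t for all t. Define L_t = (1/A_t)·∑_{i=0}^t a_i·[ f(x_i) + Δ x_i (α_i·(v_i − x_i))/α_i − (1/2)·C_f − (α_i/2)·ε·C_f ] and G_t = f(x_{t+1}) − L_t. Then A_0·G_0 ≤ (a_0²/(2·A_0))·C_f·(1+2ε) + (a_0/2)·C_f, and for all t ≥ 1, A_t·G_t −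 A_{t−1}·G_{t−1} ≤ (a_t²/(2·A_t))·C_f·(1+2ε) + (a_t/2)·C_f. -/
/-!
Since `A t = A (t-1) + a t` and `a t / α t = A t`, the increment `A t * G t - A (t-1) * G (t-1)`
equals `A t * (f (x (t+1)) - f (x t) - Δ (x t) (α t • (v t - x t)))` plus the residual terms
`a t / 2 * Cf + a t * α t / 2 * ε * Cf`. The iterates are convex combinations of points of `C`, so
the curvature bound applies to the first summand and bounds it by `A t * α t ^ 2 / 2 * Cf`, which is
`a t ^ 2 / (2 * A t) * Cf`. The case `t = 0` is the same computation with `A (-1) = 0`.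
-/

open Finset

lemma div_sum_range_succ_mem_Ioc {a : ℕ → ℝ} (ha : ∀ t, 0 < a t) (t : ℕ) :
    a t / ∑ i ∈ range (t + 1), a i ∈ Set.Ioc 0 1 :=
  ⟨div_pos (ha t) (sum_pos (fun i _ => ha i) nonempty_range_add_one),
    div_le_one_of_le₀ (single_le_sum (fun i _ => (ha i).le) (self_mem_range_succ t))
      (sum_nonneg fun i _ => (ha i).le)⟩

lemma Convex.iterate_combo_mem {E : Type*} [AddCommGroup E] [Module ℝ E] {C : Set E}
    (hC : Convex ℝ C) {α : ℕ → ℝ} (hα : ∀ t, α t ∈ Set.Icc 0 1) {x v : ℕ → E}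
    (hx0 : x 0 ∈ C) (hv : ∀ t, v t ∈ C)
    (hstep : ∀ t, x (t + 1) = (1 - α t) • x t + α t • v t) (t : ℕ) : x t ∈ C := by
  induction t with
  | zero => exact hx0
  | succ n ih =>
    rw [hstep]
    exact hC ih (hv n) (sub_nonneg.2 (hα n).2) (hα n).1 (sub_add_cancel 1 _)

lemma gap_increment_le_of_curvature (A a α Cf ε fx fx' d : ℝ) (hA : 0 < A) (ha : 0 < a)
    (hα : α = a / A)
    (hcurv : fx' - fx - d ≤ α ^ 2 / 2 * Cf) (hεCf : 0 ≤ ε * Cf) :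
    A * fx' - (A - a) * fx - a * (fx + d / α - 1 / 2 * Cf - α / 2 * ε * Cf) ≤
      a ^ 2 / (2 * A) * Cf * (1 + 2 * ε) + a / 2 * Cf := by
  subst hα
  have hcurvA : A * (fx' - fx - d) ≤ a ^ 2 / (2 * A) * Cf := by
    calc A * (fx' - fx - d) ≤ A * ((a / A) ^ 2 / 2 * Cf) := mul_le_mul_of_nonneg_left hcurv hA.le
      _ = a ^ 2 / (2 * A) * Cf := by field_simp
  have hident : A * fx' - (A - a) * fx - a * (fx + d / (a / A) - 1 / 2 * Cf - a / A / 2 * ε * Cf)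
      = A * (fx' - fx - d) + a / 2 * Cf + a ^ 2 / (2 * A) * (ε * Cf) := by
    field_simp
    ring
  have hεterm : 0 ≤ a ^ 2 / (2 * A) * (ε * Cf) := by positivity
  linarith

theorem adgt_one_step_pw_linear_general
    {E : Type*} [NormedAddCommGroup E] [NormedSpace ℝ E]
    (C : Set E) (hCconv : Convex ℝ C)
    (f : E → ℝ)
    (Δ : E → E → ℝ) (Cf : ℝ) (hCf : 0 ≤ Cf)
    (hcurv : ∀ x ∈ C, ∀ v ∈ C, ∀ α ∈ Set.Ioc (0:ℝ) 1,
      |f (x + α • (v - x)) - f x - Δ x (α • (v - x))| ≤ α ^ 2 / 2 * Cf)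
    (ε : ℝ) (hε : 0 ≤ ε)
    (a A α : ℕ → ℝ) (ha : ∀ t, 0 < a t)
    (hA : ∀ t : ℕ, A t = ∑ i ∈ Finset.range (t + 1), a i)
    (hα : ∀ t : ℕ, α t = a t / A t)
    (x v : ℕ → E) (hx0 : x 0 ∈ C) (hv : ∀ t, v t ∈ C)
    (hstep : ∀ t : ℕ, x (t + 1) = (1 - α t) • x t + α t • v t)
    (L G : ℕ → ℝ)
    (hL : ∀ t : ℕ, L t = (1 / A t) * ∑ i ∈ Finset.range (t + 1),
      a i * (f (x i) + Δ (x i) (α i • (v i - x i)) / α i - 1 / 2 * Cf - α i / 2 * ε * Cf))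
    (hG : ∀ t : ℕ, G t = f (x (t + 1)) - L t) :
    A 0 * G 0 ≤ a 0 ^ 2 / (2 * A 0) * Cf * (1 + 2 * ε) + a 0 / 2 * Cf ∧
      ∀ t : ℕ, 1 ≤ t →
        A t * G t - A (t - 1) * G (t - 1) ≤
          a t ^ 2 / (2 * A t) * Cf * (1 + 2 * ε) + a t / 2 * Cf := by
  have hApos : ∀ t, 0 < A t := fun t => hA t ▸ sum_pos (fun i _ => ha i) nonempty_range_add_one
  have hαI : ∀ t, α t ∈ Set.Ioc 0 1 := fun t => hα t ▸ hA t ▸ div_sum_range_succ_mem_Ioc ha t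
  have hxC := hCconv.iterate_combo_mem (fun t => Set.Ioc_subset_Icc_self (hαI t)) hx0 hv hstep
  have hdesc : ∀ t, f (x (t + 1)) - f (x t) - Δ (x t) (α t • (v t - x t)) ≤ α t ^ 2 / 2 * Cf := by
    intro t
    have hxt : x (t + 1) = x t + α t • (v t - x t) := by
      rw [hstep, ← AffineMap.lineMap_apply_module, AffineMap.lineMap_apply_module', add_comm]
    exact hxt ▸ (abs_le.1 (hcurv _ (hxC t) _ (hv t) _ (hαI t))).2
  set ℓ : ℕ → ℝ := fun i =>
    f (x i) + Δ (x i) (α i • (v i - x i)) / α i - 1 / 2 * Cf - α i / 2 * ε * Cf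
  have hAG : ∀ t, A t * G t = A t * f (x (t + 1)) - ∑ i ∈ range (t + 1), a i * ℓ i := fun t => by
    rw [hG, hL, mul_sub, ← mul_assoc, mul_one_div_cancel (hApos t).ne', one_mul]
  have hgap : ∀ t, A t * f (x (t + 1)) - (A t - a t) * f (x t) - a t * ℓ t ≤
      a t ^ 2 / (2 * A t) * Cf * (1 + 2 * ε) + a t / 2 * Cf := fun t =>
    gap_increment_le_of_curvature _ _ _ _ _ _ _ _ (hApos t) (ha t) (hα t) (hdesc t) (mul_nonneg hε hCf)
  constructor
  · have hA0 : A 0 - a 0 = 0 := by simp [hA]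
    simpa [hAG, hA0] using hgap 0
  · rintro t ht
    obtain ⟨s, rfl⟩ := Nat.exists_eq_add_of_le' ht
    have hAs : A (s + 1) - a (s + 1) = A s := by rw [hA, hA, sum_range_succ]; ring
    rw [Nat.add_sub_cancel, hAG, hAG, sum_range_succ _ (s + 1), ← hAs]
    linarith [hgap (s + 1)]

/-- ADGT one-step inequality for the piecewise linear model: with weights `a t > 0`,
`A t = ∑_{i=0}^t a i`, `α t = a t / A t`, the lower-bound estimate `L` using the
residual term `-(1/2) * Cf - (α i / 2) * ε * Cf` and gap `G t = f (x (t+1)) - L t`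
satisfy `A 0 * G 0 ≤ (a 0² / (2 A 0)) * Cf * (1+2ε) + (a 0 / 2) * Cf` and, for
`t ≥ 1`, `A t * G t - A (t-1) * G (t-1) ≤ (a t² / (2 A t)) * Cf * (1+2ε) + (a t / 2) * Cf`. -/
theorem adgt_one_step_pw_linear
    {E : Type*} [NormedAddCommGroup E] [NormedSpace ℝ E]
    (C : Set E) (hCne : C.Nonempty) (hCcomp : IsCompact C) (hCconv : Convex ℝ C)
    (f : E → ℝ)
    (Δ : E → E → ℝ) (Cf : ℝ) (hCf : 0 ≤ Cf)
    (hcurv : ∀ x ∈ C, ∀ v ∈ C, ∀ α ∈ Set.Ioc (0:ℝ) 1,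
      |f (x + α • (v - x)) - f x - Δ x (α • (v - x))| ≤ α ^ 2 / 2 * Cf)
    (ε : ℝ) (hε : 0 ≤ ε)
    (a A α : ℕ → ℝ) (ha : ∀ t, 0 < a t)
    (hA : ∀ t : ℕ, A t = ∑ i ∈ Finset.range (t + 1), a i)
    (hα : ∀ t : ℕ, α t = a t / A t)
    (x v : ℕ → E) (hx0 : x 0 ∈ C) (hv : ∀ t, v t ∈ C)
    (hstep : ∀ t : ℕ, x (t + 1) = (1 - α t) • x t + α t • v t)
    (L G : ℕ → ℝ)
    (hL : ∀ t : ℕ, L t = (1 / A t) * ∑ i ∈ Finset.range (t + 1),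
      a i * (f (x i) + Δ (x i) (α i • (v i - x i)) / α i - 1 / 2 * Cf - α i / 2 * ε * Cf))
    (hG : ∀ t : ℕ, G t = f (x (t + 1)) - L t) :
    A 0 * G 0 ≤ a 0 ^ 2 / (2 * A 0) * Cf * (1 + 2 * ε) + a 0 / 2 * Cf ∧
      ∀ t : ℕ, 1 ≤ t →
        A t * G t - A (t - 1) * G (t - 1) ≤
          a t ^ 2 / (2 * A t) * Cf * (1 + 2 * ε) + a t / 2 * Cf :=
  adgt_one_step_pw_linear_general C hCconv f Δ Cf hCf hcurv ε hε a A α ha hA hα x v hx0 hv hstep L G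
    hL hG
end
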